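/- arXiv:math/0601208 — 4 statements merged into one kernel-verified Lean document; each statement's English description precedes it below -/
import Mathlib

section
/- Lemma 3.1(2): Let u : Ω → ℝ be Lipschitz and let φ be a test function. Then the set of singular values ε, i.e. the set of ε ∈ ℝ for which the Lebesgue measure of S(u_ε) ∩ {x ∈ Ω : ∇φ(x) ≠ 0} is strictly positive, is at most countable. -/
open MeasureTheory
open scoped RealInnerProductSpace ENNReal

/-- The vector field `∇u + ε ∇φ + F⃗` (the a.e. gradient of `u_ε = u + ε φ`
shifted by `F⃗`). -/
noncomputable def gradShift {m : ℕ} (u φ : EuclideanSpace ℝ (Fin m) → ℝ)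
    (F : EuclideanSpace ℝ (Fin m) → EuclideanSpace ℝ (Fin m)) (ε : ℝ)
    (x : EuclideanSpace ℝ (Fin m)) : EuclideanSpace ℝ (Fin m) :=
  gradient u x + ε • gradient φ x + F x

/-- The generalized p-area functional `𝔉(u_ε)` of `u_ε = u + ε φ`. -/
noncomputable def pArea {m : ℕ} (Ω : Set (EuclideanSpace ℝ (Fin m)))
    (u φ : EuclideanSpace ℝ (Fin m) → ℝ)
    (F : EuclideanSpace ℝ (Fin m) → EuclideanSpace ℝ (Fin m))
    (H : EuclideanSpace ℝ (Fin m) → ℝ) (ε : ℝ) : ℝ :=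
  ∫ x in Ω, (‖gradShift u φ F ε x‖ + H x * (u x + ε * φ x))

/-- The singular set `S(u_ε) = {x ∈ Ω : ∇u_ε + F⃗ = 0}` of `u_ε = u + ε φ`. -/
def singSet {m : ℕ} (Ω : Set (EuclideanSpace ℝ (Fin m)))
    (u φ : EuclideanSpace ℝ (Fin m) → ℝ)
    (F : EuclideanSpace ℝ (Fin m) → EuclideanSpace ℝ (Fin m)) (ε : ℝ) :
    Set (EuclideanSpace ℝ (Fin m)) :=
  {x ∈ Ω | gradShift u φ F ε x = 0}

/-! For `ε ≠ ε'` the sets `{∇u + F⃗ + ε ∇φ = 0, ∇φ ≠ 0}` and `{∇u + F⃗ + ε' ∇φ = 0, ∇φ ≠ 0}`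
are disjoint, since on both `(ε - ε') ∇φ = 0`. They are null-measurable, because `fderiv` (hence
`gradient`) of an arbitrary function is Borel and `F⃗` is a.e. strongly measurable. In a σ-finite
measure space only countably many members of a disjoint family of null-measurable sets can have
positive measure. -/

theorem measurable_gradient {𝕜 F : Type*} [RCLike 𝕜] [NormedAddCommGroup F]
    [InnerProductSpace 𝕜 F] [CompleteSpace F] [MeasurableSpace F] [BorelSpace F]
    (f : F → 𝕜) : Measurable (gradient f) :=
  (InnerProductSpace.toDual 𝕜 F).symm.continuous.measurable.comp (measurable_fderiv 𝕜 f)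

theorem nullMeasurableSet_add_smul_eq_zero_and_ne_zero {X 𝕜 E : Type*} [MeasurableSpace X]
    {μ : Measure X} [NormedField 𝕜] [NormedAddCommGroup E] [NormedSpace 𝕜 E]
    [MeasurableSpace E] [BorelSpace E] {f v : X → E}
    (hf : AEStronglyMeasurable f μ) (hv : AEStronglyMeasurable v μ) (t : 𝕜) :
    NullMeasurableSet {x | f x + t • v x = 0 ∧ v x ≠ 0} μ :=
  ((hf.add (hv.const_smul t)).aemeasurable.nullMeasurable (measurableSet_singleton 0)).inter
    (hv.aemeasurable.nullMeasurable (measurableSet_singleton 0)).compl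

theorem countable_meas_pos_add_smul_eq_zero_and_ne_zero {X 𝕜 E : Type*} [MeasurableSpace X]
    {μ : Measure X} [SFinite μ] [NormedField 𝕜] [NormedAddCommGroup E] [NormedSpace 𝕜 E]
    [MeasurableSpace E] [BorelSpace E] {f v : X → E}
    (hf : AEStronglyMeasurable f μ) (hv : AEStronglyMeasurable v μ) :
    {t : 𝕜 | 0 < μ {x | f x + t • v x = 0 ∧ v x ≠ 0}}.Countable := by
  refine Measure.countable_meas_pos_of_disjoint_iUnion₀
    (nullMeasurableSet_add_smul_eq_zero_and_ne_zero hf hv) fun t t' htt' ↦ ?_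
  refine (Set.disjoint_left.mpr ?_).aedisjoint
  rintro x ⟨hx, hvx⟩ ⟨hx', -⟩
  have : (t - t') • v x = 0 := by rw [sub_smul, ← add_sub_add_left_eq_sub, hx, hx', sub_zero]
  exact htt' (sub_eq_zero.mp ((smul_eq_zero.mp this).resolve_right hvx))

theorem countable_singular_epsilons_general {m : ℕ}
    (Ω : Set (EuclideanSpace ℝ (Fin m)))
    (F : EuclideanSpace ℝ (Fin m) → EuclideanSpace ℝ (Fin m))
    (hF : IntegrableOn F Ω volume)
    (u : EuclideanSpace ℝ (Fin m) → ℝ)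
    (φ : EuclideanSpace ℝ (Fin m) → ℝ) :
    Set.Countable {ε : ℝ |
      0 < volume (singSet Ω u φ F ε ∩ {x | gradient φ x ≠ 0})} := by
  have hcount := countable_meas_pos_add_smul_eq_zero_and_ne_zero (𝕜 := ℝ)
    (μ := volume.restrict Ω)
    ((measurable_gradient u).aestronglyMeasurable.add hF.aestronglyMeasurable)
    (measurable_gradient φ).aestronglyMeasurable
  refine Set.Countable.mono (fun ε (hε : 0 < volume _) ↦ hε.trans_le ?_) hcount
  calc volume (singSet Ω u φ F ε ∩ {x | gradient φ x ≠ 0})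
      = volume ({x | (gradient u + F) x + ε • gradient φ x = 0 ∧ gradient φ x ≠ 0} ∩ Ω) := by
        congr 1
        ext x
        simp only [singSet, gradShift, Pi.add_apply, add_right_comm, Set.mem_inter_iff,
          Set.mem_ofPred_eq]
        tauto
    _ ≤ _ := Measure.le_restrict_apply _ _

/-- **Lemma 3.1(2)**: there are at most countably many singular `ε`'s, i.e. the set of
`ε ∈ ℝ` for which `S(u_ε) ∩ {∇φ ≠ 0}` has positive Lebesgue measure is countable. -/
theorem countable_singular_epsilons {m : ℕ} (hm : 1 ≤ m)
    (Ω : Set (EuclideanSpace ℝ (Fin m)))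
    (hΩopen : IsOpen Ω) (hΩbdd : Bornology.IsBounded Ω)
    (hΩne : Ω.Nonempty) (hΩconn : IsConnected Ω)
    (F : EuclideanSpace ℝ (Fin m) → EuclideanSpace ℝ (Fin m))
    (hF : IntegrableOn F Ω volume)
    (H : EuclideanSpace ℝ (Fin m) → ℝ)
    (hH : MemLp H ⊤ (volume.restrict Ω))
    (u : EuclideanSpace ℝ (Fin m) → ℝ) (hu : ∃ K, LipschitzOnWith K u Ω)
    (φ : EuclideanSpace ℝ (Fin m) → ℝ) (hφ : ∃ K, LipschitzWith K φ)
    (hφsupp : HasCompactSupport φ) (hφΩ : tsupport φ ⊆ Ω) :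
    Set.Countable {ε : ℝ |
      0 < volume (singSet Ω u φ F ε ∩ {x | gradient φ x ≠ 0})} :=
  countable_singular_epsilons_general Ω F hF u φ
end

section
/- Lemma 3.1(3): Let u : Ω → ℝ be Lipschitz and let φ be a test function. If ε₀ ∈ ℝ is regular for u, φ, then ∫_{S(u_{ε₀})} |∇φ(x)| dx = 0, the function ε ↦ 𝔉(u_ε) is differentiable at ε₀, and its derivative there equals ∫_{Ω ∖ S(u_{ε₀})} N(u_{ε₀})(x)·∇φ(x) dx + ∫_Ω H(x)φ(x) dx. -/
/-!
Write `∇u_ε + F⃗ = c + (ε - ε₀) ∇φ` with `c = ∇u_{ε₀} + F⃗`. For each `x` the map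
`ε ↦ |c(x) + (ε - ε₀) ∇φ(x)|` is `|∇φ(x)|`-Lipschitz, and it is differentiable at `ε₀` with
derivative `N(u_{ε₀})(x) · ∇φ(x)` whenever `c(x) ≠ 0` or `∇φ(x) = 0`, which regularity of `ε₀`
guarantees for almost every `x ∈ Ω`. Lipschitz functions have bounded gradients and `Ω` has finite
measure, so `|∇φ|` is an integrable dominating function and we may differentiate under the
integral; the term `∫ H u_ε` is affine in `ε`. On `S(u_{ε₀})` the integrand `N · ∇φ` is
`‖0‖⁻¹ • 0 · ∇φ = 0`, so integrating it over `Ω` or over `Ω ∖ S(u_{ε₀})` gives the same value.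
-/
open MeasureTheory
open scoped RealInnerProductSpace ENNReal

section Norm

variable {E : Type*} [NormedAddCommGroup E] [InnerProductSpace ℝ E]

theorem HasDerivAt.norm {f : ℝ → E} {f' : E} {t : ℝ} (hf : HasDerivAt f f' t) (h0 : f t ≠ 0) :
    HasDerivAt (fun s => ‖f s‖) ⟪‖f t‖⁻¹ • f t, f'⟫ t := by
  have hsq : (fun s => ‖f s‖) = fun s => √(‖f s‖ ^ 2) := by
    funext s; rw [Real.sqrt_sq (norm_nonneg _)]
  rw [hsq]
  convert hf.norm_sq.sqrt (pow_ne_zero 2 (norm_ne_zero_iff.2 h0)) using 1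
  rw [Real.sqrt_sq (norm_nonneg _), real_inner_smul_left]
  field_simp

theorem hasDerivAt_norm_add_smul (c w : E) {t₀ : ℝ} (h : c + t₀ • w ≠ 0 ∨ w = 0) :
    HasDerivAt (fun t : ℝ => ‖c + t • w‖) ⟪‖c + t₀ • w‖⁻¹ • (c + t₀ • w), w⟫ t₀ := by
  rcases h with h | rfl
  · exact (((hasDerivAt_id t₀).smul_const w).const_add c).norm (by simpa using h) |>.congr_deriv
      (by simp)
  · simpa using hasDerivAt_const t₀ ‖c‖

theorem lipschitzWith_norm_add_smul (c w : E) : LipschitzWith ‖w‖₊ fun t : ℝ => ‖c + t • w‖ := by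
  refine LipschitzWith.of_dist_le_mul fun s t => ?_
  calc dist ‖c + s • w‖ ‖c + t • w‖ ≤ ‖(c + s • w) - (c + t • w)‖ := abs_norm_sub_norm_le _ _
    _ = ‖w‖ * dist s t := by
      rw [add_sub_add_left_eq_sub, ← sub_smul, norm_smul, Real.dist_eq, Real.norm_eq_abs, mul_comm]

end Norm

section Integral

variable {α : Type*} [MeasurableSpace α] {μ : Measure α}

theorem hasDerivAt_integral_norm_add_smul {E : Type*} [NormedAddCommGroup E]
    [InnerProductSpace ℝ E] {a b : α → E} (ha : Integrable a μ) (hb : Integrable b μ) {t₀ : ℝ}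
    (hreg : ∀ᵐ x ∂μ, a x + t₀ • b x ≠ 0 ∨ b x = 0) :
    HasDerivAt (fun t : ℝ => ∫ x, ‖a x + t • b x‖ ∂μ)
      (∫ x, ⟪‖a x + t₀ • b x‖⁻¹ • (a x + t₀ • b x), b x⟫ ∂μ) t₀ := by
  have hmeas (t : ℝ) : AEStronglyMeasurable (fun x => a x + t • b x) μ :=
    ha.1.add (hb.1.const_smul t)
  have hunit : AEStronglyMeasurable (fun x => ‖a x + t₀ • b x‖⁻¹ • (a x + t₀ • b x)) μ :=
    (hmeas t₀).norm.aemeasurable.inv.aestronglyMeasurable.smul (hmeas t₀)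
  refine (hasDerivAt_integral_of_dominated_loc_of_lip (bound := fun x => ‖b x‖) Filter.univ_mem
    (.of_forall fun t => (hmeas t).norm) (ha.add (hb.smul t₀)).norm (hunit.inner hb.1)
    (.of_forall fun x => ?_) hb.norm
    (hreg.mono fun x hx => hasDerivAt_norm_add_smul (a x) (b x) hx)).2
  rw [Real.nnabs_of_nonneg (norm_nonneg _), norm_toNNReal]
  exact (lipschitzWith_norm_add_smul (a x) (b x)).lipschitzOnWith

theorem hasDerivAt_integral_mul_add_mul {g h k : α → ℝ} (hg : MemLp g ∞ μ) (hh : Integrable h μ)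
    (hk : Integrable k μ) (t₀ : ℝ) :
    HasDerivAt (fun t : ℝ => ∫ x, g x * (h x + t * k x) ∂μ) (∫ x, g x * k x ∂μ) t₀ := by
  have hlin : (fun t : ℝ => ∫ x, g x * (h x + t * k x) ∂μ)
      = fun t => (∫ x, g x * h x ∂μ) + t * ∫ x, g x * k x ∂μ := by
    have hgh : Integrable (fun x => g x * h x) μ := hh.mul_of_top_right hg
    have hgk : Integrable (fun x => g x * k x) μ := hk.mul_of_top_right hg
    funext t
    rw [← integral_const_mul, ← integral_add hgh (hgk.const_mul t)]
    congr 1 with x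
    ring
  rw [hlin]
  exact (hasDerivAt_mul_const _).const_add _

theorem setIntegral_eq_zero_of_measure_inter_support_eq_zero {E : Type*} [NormedAddCommGroup E]
    [NormedSpace ℝ E] {f : α → E} {s : Set α} (h : μ (s ∩ Function.support f) = 0) :
    ∫ x in s, f x ∂μ = 0 :=
  setIntegral_eq_zero_of_ae_eq_zero <| (measure_eq_zero_iff_ae_notMem.1 h).mono
    fun _ hx hxs => Function.notMem_support.1 fun hf => hx ⟨hxs, hf⟩

end Integral

section Gradient

variable {E : Type*} [NormedAddCommGroup E] [InnerProductSpace ℝ E] [CompleteSpace E]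

theorem norm_gradient_le_of_lipschitzOn {f : E → ℝ} {s : Set E} {x : E} (hs : s ∈ nhds x)
    {K : NNReal} (hf : LipschitzOnWith K f s) : ‖gradient f x‖ ≤ K :=
  ((InnerProductSpace.toDual ℝ E).symm.norm_map _).trans_le (norm_fderiv_le_of_lipschitzOn ℝ hs hf)

variable [MeasurableSpace E] [BorelSpace E]

theorem measurable_gradient_s2 (f : E → ℝ) : Measurable (gradient f) :=
  (InnerProductSpace.toDual ℝ E).symm.continuous.measurable.comp (measurable_fderiv ℝ f)

theorem LipschitzOnWith.integrableOn_gradient [SecondCountableTopology E] {μ : Measure E}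
    {f : E → ℝ} {s : Set E} {K : NNReal} (hf : LipschitzOnWith K f s) (hs : IsOpen s)
    (hμs : μ s ≠ ∞) : IntegrableOn (gradient f) s μ :=
  Measure.integrableOn_of_bounded hμs (measurable_gradient_s2 f).aestronglyMeasurable
    ((ae_restrict_mem hs.measurableSet).mono fun _ hx =>
      norm_gradient_le_of_lipschitzOn (hs.mem_nhds hx) hf)

end Gradient

theorem LipschitzOnWith.integrableOn_of_isBounded {X : Type*} [MetricSpace X]
    [ProperSpace X] [MeasurableSpace X] [OpensMeasurableSpace X] {μ : Measure X}
    [IsFiniteMeasureOnCompacts μ] {f : X → ℝ} {s : Set X} {K : NNReal}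
    (hf : LipschitzOnWith K f s) (hs : Bornology.IsBounded s) (hs' : MeasurableSet s) :
    IntegrableOn f s μ := by
  obtain ⟨g, hg, hfg⟩ := hf.extend_real
  exact ((hg.continuous.continuousOn.integrableOn_compact hs.isCompact_closure).mono_set
    subset_closure).congr_fun hfg.symm hs'

section PArea

variable {m : ℕ} {Ω : Set (EuclideanSpace ℝ (Fin m))} {u φ : EuclideanSpace ℝ (Fin m) → ℝ}
  {F : EuclideanSpace ℝ (Fin m) → EuclideanSpace ℝ (Fin m)} {H : EuclideanSpace ℝ (Fin m) → ℝ}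

theorem gradShift_eq_add_smul (ε : ℝ) (x : EuclideanSpace ℝ (Fin m)) :
    gradShift u φ F ε x = (gradient u x + F x) + ε • gradient φ x := by
  rw [gradShift, add_right_comm]

theorem pArea_eq_add (hgrad : IntegrableOn (fun x => gradient u x + F x) Ω)
    (hφgrad : IntegrableOn (gradient φ) Ω) (hu : IntegrableOn u Ω) (hφ : IntegrableOn φ Ω)
    (hH : MemLp H ∞ (volume.restrict Ω)) (ε : ℝ) :
    pArea Ω u φ F H ε = (∫ x in Ω, ‖(gradient u x + F x) + ε • gradient φ x‖) +
      ∫ x in Ω, H x * (u x + ε * φ x) := by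
  simp only [pArea, gradShift_eq_add_smul]
  exact integral_add (hgrad.add (hφgrad.smul ε)).norm
    ((hu.add (hφ.const_mul ε)).mul_of_top_right hH)

theorem ae_gradShift_ne_zero_or_gradient_eq_zero (hΩ : MeasurableSet Ω) {ε₀ : ℝ}
    (hreg : volume (singSet Ω u φ F ε₀ ∩ {x | gradient φ x ≠ 0}) = 0) :
    ∀ᵐ x ∂volume.restrict Ω, gradShift u φ F ε₀ x ≠ 0 ∨ gradient φ x = 0 := by
  filter_upwards [ae_restrict_mem hΩ,
    ae_restrict_of_ae (measure_eq_zero_iff_ae_notMem.1 hreg)] with x hxΩ hx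
  rw [or_iff_not_imp_left, not_not]
  exact fun h => by_contra fun hφx => hx ⟨⟨hxΩ, h⟩, hφx⟩

theorem setIntegral_sdiff_singSet (hΩ : MeasurableSet Ω) (ε₀ : ℝ)
    (w : EuclideanSpace ℝ (Fin m) → EuclideanSpace ℝ (Fin m)) :
    ∫ x in Ω \ singSet Ω u φ F ε₀, ⟪‖gradShift u φ F ε₀ x‖⁻¹ • gradShift u φ F ε₀ x, w x⟫ =
      ∫ x in Ω, ⟪‖gradShift u φ F ε₀ x‖⁻¹ • gradShift u φ F ε₀ x, w x⟫ := by
  refine (setIntegral_eq_of_subset_of_forall_sdiff_eq_zero hΩ Set.sdiff_subset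
    fun x hx => ?_).symm
  simp [(Set.sdiff_sdiff_cancel_left (Set.sep_subset _ _) ▸ hx).2]

end PArea

theorem hasDerivAt_pArea_of_regular_general {m : ℕ}
    (Ω : Set (EuclideanSpace ℝ (Fin m)))
    (hΩopen : IsOpen Ω) (hΩbdd : Bornology.IsBounded Ω)
    (F : EuclideanSpace ℝ (Fin m) → EuclideanSpace ℝ (Fin m))
    (hF : IntegrableOn F Ω volume)
    (H : EuclideanSpace ℝ (Fin m) → ℝ)
    (hH : MemLp H ⊤ (volume.restrict Ω))
    (u : EuclideanSpace ℝ (Fin m) → ℝ) (hu : ∃ K, LipschitzOnWith K u Ω)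
    (φ : EuclideanSpace ℝ (Fin m) → ℝ) (hφ : ∃ K, LipschitzWith K φ)
    (hφsupp : HasCompactSupport φ)
    (ε₀ : ℝ)
    (hreg : volume (singSet Ω u φ F ε₀ ∩ {x | gradient φ x ≠ 0}) = 0) :
    (∫ x in singSet Ω u φ F ε₀, ‖gradient φ x‖) = 0 ∧
    HasDerivAt (fun ε : ℝ => pArea Ω u φ F H ε)
      ((∫ x in Ω \ singSet Ω u φ F ε₀,
          ⟪‖gradShift u φ F ε₀ x‖⁻¹ • gradShift u φ F ε₀ x, gradient φ x⟫) +
        ∫ x in Ω, H x * φ x) ε₀ := by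
  obtain ⟨K, hK⟩ := hu
  obtain ⟨Kφ, hKφ⟩ := hφ
  have hΩ : volume Ω ≠ ∞ := hΩbdd.measure_lt_top.ne
  have hφgrad : IntegrableOn (gradient φ) Ω :=
    hKφ.lipschitzOnWith.integrableOn_gradient hΩopen hΩ
  have hgrad : IntegrableOn (fun x => gradient u x + F x) Ω :=
    (hK.integrableOn_gradient hΩopen hΩ).add hF
  have hu_int : IntegrableOn u Ω := hK.integrableOn_of_isBounded hΩbdd hΩopen.measurableSet
  have hφ_int : IntegrableOn φ Ω :=
    (hKφ.continuous.integrable_of_hasCompactSupport hφsupp).integrableOn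
  have hae := ae_gradShift_ne_zero_or_gradient_eq_zero hΩopen.measurableSet hreg
  refine ⟨setIntegral_eq_zero_of_measure_inter_support_eq_zero ?_, ?_⟩
  · simpa only [Function.support, ne_eq, norm_eq_zero] using hreg
  rw [funext (pArea_eq_add hgrad hφgrad hu_int hφ_int hH),
    setIntegral_sdiff_singSet hΩopen.measurableSet]
  simp only [gradShift_eq_add_smul] at hae ⊢
  exact (hasDerivAt_integral_norm_add_smul hgrad hφgrad hae).add
    (hasDerivAt_integral_mul_add_mul hH hu_int hφ_int ε₀)

/-- **Lemma 3.1(3)**: at a regular value `ε₀` one has `∫_{S(u_{ε₀})} |∇φ| = 0`, the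
function `ε ↦ 𝔉(u_ε)` is differentiable at `ε₀`, and its derivative there equals
`∫_{Ω ∖ S(u_{ε₀})} N(u_{ε₀})·∇φ + ∫_Ω H φ`. -/
theorem hasDerivAt_pArea_of_regular {m : ℕ} (hm : 1 ≤ m)
    (Ω : Set (EuclideanSpace ℝ (Fin m)))
    (hΩopen : IsOpen Ω) (hΩbdd : Bornology.IsBounded Ω)
    (hΩne : Ω.Nonempty) (hΩconn : IsConnected Ω)
    (F : EuclideanSpace ℝ (Fin m) → EuclideanSpace ℝ (Fin m))
    (hF : IntegrableOn F Ω volume)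
    (H : EuclideanSpace ℝ (Fin m) → ℝ)
    (hH : MemLp H ⊤ (volume.restrict Ω))
    (u : EuclideanSpace ℝ (Fin m) → ℝ) (hu : ∃ K, LipschitzOnWith K u Ω)
    (φ : EuclideanSpace ℝ (Fin m) → ℝ) (hφ : ∃ K, LipschitzWith K φ)
    (hφsupp : HasCompactSupport φ) (hφΩ : tsupport φ ⊆ Ω)
    (ε₀ : ℝ)
    (hreg : volume (singSet Ω u φ F ε₀ ∩ {x | gradient φ x ≠ 0}) = 0) :
    (∫ x in singSet Ω u φ F ε₀, ‖gradient φ x‖) = 0 ∧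
    HasDerivAt (fun ε : ℝ => pArea Ω u φ F H ε)
      ((∫ x in Ω \ singSet Ω u φ F ε₀,
          ⟪‖gradShift u φ F ε₀ x‖⁻¹ • gradShift u φ F ε₀ x, gradient φ x⟫) +
        ∫ x in Ω, H x * φ x) ε₀ :=
  hasDerivAt_pArea_of_regular_general Ω hΩopen hΩbdd F hF H hH u hu φ hφ hφsupp ε₀ hreg
end

section
/- Theorem D (size of the singular set): Let Ω ⊂ ℝ^m be a domain (nonempty open connected set), let u ∈ C²(Ω), and let F⃗ = (F₁,…,F_m) be a C¹ vector field on Ω. For p ∈ Ω let h(p) denote the m×m matrix with entries h_{JI}(p) = ∂_J F_I(p) − ∂_I F_J(p), and let r(p) be its rank. Then for every p ∈ Ω there exists an open neighborhood V of p with V ⊆ Ω such that S(u) ∩ V is contained in a C¹ embedded submanifold of ℝ^m of dimension m − ⌊(r(p)+1)/2⌋; in particular, the Hausdorff dimension of S(u) ∩ V with respect to the Euclidean metric satisfies dim_H(S(u) ∩ V) ≤ m − ⌊(r(p)+1)/2⌋. -/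
open MeasureTheory
open scoped RealInnerProductSpace ENNReal
open Module Set Matrix
open scoped NNReal

/-- The rank of the `m × m` matrix `(∂_J F_I − ∂_I F_J)(p)`. -/
noncomputable def curlRank {m : ℕ}
    (F : EuclideanSpace ℝ (Fin m) → EuclideanSpace ℝ (Fin m))
    (p : EuclideanSpace ℝ (Fin m)) : ℕ :=
  (Matrix.of fun J I : Fin m =>
    fderiv ℝ (fun y => F y I) p (EuclideanSpace.single J 1) -
      fderiv ℝ (fun y => F y J) p (EuclideanSpace.single I 1)).rank

lemma aux_matrix_rank_sub_le {n : Type*} [Fintype n] [DecidableEq n]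
    (A B : Matrix n n ℝ) : (A - B).rank ≤ A.rank + B.rank := by
  have h : LinearMap.range (A - B).mulVecLin ≤
      LinearMap.range A.mulVecLin ⊔ LinearMap.range B.mulVecLin := by
    rintro x ⟨v, rfl⟩
    rw [Matrix.mulVecLin_apply, Matrix.sub_mulVec]
    exact Submodule.sub_mem _
      (Submodule.mem_sup_left ⟨v, by simp [Matrix.mulVecLin_apply]⟩)
      (Submodule.mem_sup_right ⟨v, by simp [Matrix.mulVecLin_apply]⟩)
  calc (A - B).rank ≤ finrank ℝ ↥(LinearMap.range A.mulVecLin ⊔ LinearMap.range B.mulVecLin) :=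
        Submodule.finrank_mono h
    _ ≤ A.rank + B.rank := Submodule.finrank_add_le_finrank_add_finrank _ _

lemma aux_dimH_le {m : ℕ} {K : Type*} [NormedAddCommGroup K] [NormedSpace ℝ K]
    [FiniteDimensional ℝ K]
    (Q : EuclideanSpace ℝ (Fin m) → K) (X : Set (EuclideanSpace ℝ (Fin m))) (c : ℝ≥0)
    (h : ∀ x ∈ X, ∀ y ∈ X, edist x y ≤ c * edist (Q x) (Q y)) :
    dimH X ≤ (finrank ℝ K : ℝ≥0∞) := by
  classical
  set g : K → EuclideanSpace ℝ (Fin m) := Function.invFunOn Q X with hg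
  have hmem : ∀ z ∈ Q '' X, g z ∈ X ∧ Q (g z) = z := by
    rintro z ⟨x, hx, rfl⟩
    exact ⟨Function.invFunOn_mem ⟨x, hx, rfl⟩, Function.invFunOn_eq ⟨x, hx, rfl⟩⟩
  have hlip : LipschitzOnWith c g (Q '' X) := by
    intro z hz z' hz'
    obtain ⟨hz1, hz2⟩ := hmem z hz
    obtain ⟨hz1', hz2'⟩ := hmem z' hz'
    calc edist (g z) (g z') ≤ c * edist (Q (g z)) (Q (g z')) := h _ hz1 _ hz1'
      _ = c * edist z z' := by rw [hz2, hz2']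
  have himg : g '' (Q '' X) = X := by
    apply Subset.antisymm
    · rintro x ⟨z, hz, rfl⟩; exact (hmem z hz).1
    · intro x hx
      refine ⟨Q x, mem_image_of_mem _ hx, ?_⟩
      obtain ⟨h1, h2⟩ := hmem (Q x) (mem_image_of_mem _ hx)
      have : edist (g (Q x)) x ≤ c * edist (Q (g (Q x))) (Q x) := h _ h1 _ hx
      rw [h2] at this
      simpa [edist_eq_zero] using this
  calc dimH X = dimH (g '' (Q '' X)) := by rw [himg]
    _ ≤ dimH (Q '' X) := hlip.dimH_image_le
    _ ≤ dimH (univ : Set K) := dimH_mono (subset_univ _)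
    _ = (finrank ℝ K : ℝ≥0∞) := Real.dimH_univ_eq_finrank K

lemma aux_exists_L {m k : ℕ}
    (T : EuclideanSpace ℝ (Fin m) →L[ℝ] EuclideanSpace ℝ (Fin m))
    (hk : k ≤ finrank ℝ ↥(LinearMap.range (T : EuclideanSpace ℝ (Fin m) →ₗ[ℝ]
      EuclideanSpace ℝ (Fin m)))) :
    ∃ L : EuclideanSpace ℝ (Fin m) →L[ℝ] EuclideanSpace ℝ (Fin k),
      Function.Surjective (L.comp T) := by
  classical
  set W := LinearMap.range (T : EuclideanSpace ℝ (Fin m) →ₗ[ℝ] EuclideanSpace ℝ (Fin m)) with hW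
  let b := finBasis ℝ ↥W
  let v : Fin k → EuclideanSpace ℝ (Fin m) := fun i => (b (Fin.castLE hk i) : _)
  have hv : LinearIndependent ℝ v := by
    have h1 : LinearIndependent ℝ (fun i : Fin k => b (Fin.castLE hk i)) :=
      b.linearIndependent.comp _ (Fin.castLE_injective hk)
    exact h1.map' W.subtype W.ker_subtype
  have hvW : ∀ i, v i ∈ W := fun i => (b (Fin.castLE hk i)).2
  let bk := (EuclideanSpace.basisFun (Fin k) ℝ).toBasis
  let j : EuclideanSpace ℝ (Fin k) →ₗ[ℝ] EuclideanSpace ℝ (Fin m) := bk.constr ℝ v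
  have hjW : ∀ x, j x ∈ W := by
    intro x
    rw [Basis.constr_apply]
    exact Submodule.finsuppSum_mem _ _ _ _ fun i _ => Submodule.smul_mem _ _ (hvW i)
  have hjker : LinearMap.ker j = ⊥ := by
    rw [LinearMap.ker_eq_bot]
    intro x y hxy
    apply bk.repr.injective
    ext i
    have hx : j x = Finsupp.linearCombination ℝ v (bk.repr x) := by
      rw [Basis.constr_apply]; rfl
    have hy : j y = Finsupp.linearCombination ℝ v (bk.repr y) := by
      rw [Basis.constr_apply]; rfl
    have : bk.repr x = bk.repr y := hv (by rw [← hx, ← hy]; exact hxy)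
    rw [this]
  obtain ⟨L₀, hL₀⟩ := j.exists_leftInverse_of_injective hjker
  refine ⟨LinearMap.toContinuousLinearMap L₀, ?_⟩
  intro y
  obtain ⟨x, hx⟩ : j y ∈ W := hjW y
  refine ⟨x, ?_⟩
  have : T x = j y := hx
  simp only [ContinuousLinearMap.comp_apply, LinearMap.coe_toContinuousLinearMap', this]
  have := LinearMap.ext_iff.1 hL₀ y
  simpa using this


lemma aux_matrix_rank_sub_le' {n : Type*} [Fintype n] [DecidableEq n]
    (A B : Matrix n n ℝ) : (A - B).rank ≤ A.rank + B.rank := by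
  have h : LinearMap.range (A - B).mulVecLin ≤
      LinearMap.range A.mulVecLin ⊔ LinearMap.range B.mulVecLin := by
    rintro x ⟨v, rfl⟩
    rw [Matrix.mulVecLin_apply, Matrix.sub_mulVec]
    exact Submodule.sub_mem _
      (Submodule.mem_sup_left ⟨v, by simp [Matrix.mulVecLin_apply]⟩)
      (Submodule.mem_sup_right ⟨v, by simp [Matrix.mulVecLin_apply]⟩)
  calc (A - B).rank ≤ finrank ℝ ↥(LinearMap.range A.mulVecLin ⊔ LinearMap.range B.mulVecLin) :=
        Submodule.finrank_mono h
    _ ≤ A.rank + B.rank := Submodule.finrank_add_le_finrank_add_finrank _ _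

lemma aux_rank {m : ℕ} {Ω : Set (EuclideanSpace ℝ (Fin m))} (hΩopen : IsOpen Ω)
    {u : EuclideanSpace ℝ (Fin m) → ℝ} (hu : ContDiffOn ℝ 2 u Ω)
    {F : EuclideanSpace ℝ (Fin m) → EuclideanSpace ℝ (Fin m)} (hF : ContDiffOn ℝ 1 F Ω)
    {p : EuclideanSpace ℝ (Fin m)} (hp : p ∈ Ω) :
    curlRank F p ≤ 2 * finrank ℝ
      ↥(LinearMap.range ((fderiv ℝ (fun y => gradient u y + F y) p) :
          EuclideanSpace ℝ (Fin m) →ₗ[ℝ] EuclideanSpace ℝ (Fin m))) := by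
  classical
  set Φ : EuclideanSpace ℝ (Fin m) → EuclideanSpace ℝ (Fin m) :=
    fun y => gradient u y + F y with hΦdef
  set T := fderiv ℝ Φ p with hT
  have hpn : Ω ∈ nhds p := hΩopen.mem_nhds hp
  have hf1C : ContDiffOn ℝ 1 (fderiv ℝ u) Ω := hu.fderiv_of_isOpen hΩopen (by norm_num)
  have hgradC : ContDiffOn ℝ 1 (gradient u) Ω :=
    (InnerProductSpace.toDual ℝ (EuclideanSpace ℝ (Fin m))).symm.contDiff.comp_contDiffOn hf1C
  have hgd : DifferentiableAt ℝ (gradient u) p :=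
    (hgradC.contDiffAt hpn).differentiableAt one_ne_zero
  have hFd : DifferentiableAt ℝ F p := (hF.contDiffAt hpn).differentiableAt one_ne_zero
  have hΦd : DifferentiableAt ℝ Φ p := hgd.add hFd
  have hco : ∀ (f : EuclideanSpace ℝ (Fin m) → EuclideanSpace ℝ (Fin m)),
      DifferentiableAt ℝ f p → ∀ (I : Fin m),
      HasFDerivAt (fun y => f y I) ((EuclideanSpace.proj I).comp (fderiv ℝ f p)) p := by
    intro f hf I
    have h := (EuclideanSpace.proj (𝕜 := ℝ) I).hasFDerivAt.comp p hf.hasFDerivAt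
    exact h
  have hgradI : ∀ (y : EuclideanSpace ℝ (Fin m)) (I : Fin m),
      gradient u y I = fderiv ℝ u y (EuclideanSpace.single I 1) := by
    intro y I
    have h1 : (inner ℝ (EuclideanSpace.single I (1:ℝ)) (gradient u y) : ℝ) = gradient u y I := by
      rw [EuclideanSpace.inner_single_left]; simp
    have h2 : (inner ℝ (gradient u y) (EuclideanSpace.single I (1:ℝ)) : ℝ)
        = fderiv ℝ u y (EuclideanSpace.single I 1) := by
      simp only [gradient]
      exact InnerProductSpace.toDual_symm_apply
    rw [← h1, real_inner_comm, h2]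
  have hf1d : DifferentiableAt ℝ (fderiv ℝ u) p := (hf1C.contDiffAt hpn).differentiableAt one_ne_zero
  have hsym : IsSymmSndFDerivAt ℝ u p := (hu.contDiffAt hpn).isSymmSndFDerivAt (by simp)
  have hgrad_snd : ∀ I : Fin m, HasFDerivAt (fun y => gradient u y I)
      ((ContinuousLinearMap.apply ℝ ℝ (EuclideanSpace.single I (1:ℝ))).comp
        (fderiv ℝ (fderiv ℝ u) p)) p := by
    intro I
    have h := (ContinuousLinearMap.apply ℝ ℝ
      (EuclideanSpace.single I (1:ℝ))).hasFDerivAt.comp p hf1d.hasFDerivAt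
    have heq : (fun y => gradient u y I)
        = fun y => (fderiv ℝ u y) (EuclideanSpace.single I 1) := funext fun y => hgradI y I
    rw [heq]
    exact h
  have hgrad_eval : ∀ I J : Fin m,
      fderiv ℝ (gradient u) p (EuclideanSpace.single J 1) I
        = fderiv ℝ (fderiv ℝ u) p (EuclideanSpace.single J 1) (EuclideanSpace.single I 1) := by
    intro I J
    have h := (hco (gradient u) hgd I).unique (hgrad_snd I)
    simpa using ContinuousLinearMap.ext_iff.1 h (EuclideanSpace.single J 1)
  have hF_eval : ∀ I J : Fin m, fderiv ℝ (fun y => F y I) p (EuclideanSpace.single J 1)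
      = fderiv ℝ F p (EuclideanSpace.single J 1) I := by
    intro I J
    rw [(hco F hFd I).fderiv]; simp
  have hΦ_eval : ∀ I J : Fin m, T (EuclideanSpace.single J 1) I
      = fderiv ℝ (gradient u) p (EuclideanSpace.single J 1) I
        + fderiv ℝ F p (EuclideanSpace.single J 1) I := by
    intro I J
    have h1 := hco Φ hΦd I
    have h2 : HasFDerivAt (fun y => Φ y I)
        (((EuclideanSpace.proj I).comp (fderiv ℝ (gradient u) p))
          + ((EuclideanSpace.proj I).comp (fderiv ℝ F p))) p := by
      have h3 := (hco (gradient u) hgd I).add (hco F hFd I)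
      have heq : ((fun y => gradient u y I) + fun y => F y I) = fun y => Φ y I := rfl
      rw [heq] at h3
      exact h3
    have h := h1.unique h2
    simpa using ContinuousLinearMap.ext_iff.1 h (EuclideanSpace.single J 1)
  set D : Matrix (Fin m) (Fin m) ℝ :=
    Matrix.of (fun J I => T (EuclideanSpace.single J 1) I) with hD
  have hcurl : (Matrix.of fun J I : Fin m =>
      fderiv ℝ (fun y => F y I) p (EuclideanSpace.single J 1) -
        fderiv ℝ (fun y => F y J) p (EuclideanSpace.single I 1)) = D - Dᵀ := by
    ext J I
    simp only [Matrix.sub_apply, Matrix.transpose_apply, Matrix.of_apply, hD]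
    rw [hF_eval I J, hF_eval J I, hΦ_eval I J, hΦ_eval J I, hgrad_eval I J, hgrad_eval J I,
      hsym (EuclideanSpace.single J 1) (EuclideanSpace.single I 1)]
    ring
  set bE := (EuclideanSpace.basisFun (Fin m) ℝ).toBasis with hbE
  have hDT : Dᵀ = LinearMap.toMatrix bE bE
      (T : EuclideanSpace ℝ (Fin m) →ₗ[ℝ] EuclideanSpace ℝ (Fin m)) := by
    ext I J
    rw [LinearMap.toMatrix_apply]
    simp [hD, hbE, EuclideanSpace.basisFun_apply, EuclideanSpace.basisFun_repr,
      Matrix.transpose_apply]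
  have hrankD : Dᵀ.rank = finrank ℝ
      ↥(LinearMap.range (T : EuclideanSpace ℝ (Fin m) →ₗ[ℝ] EuclideanSpace ℝ (Fin m))) := by
    rw [hDT, Matrix.rank_eq_finrank_range_toLin _ bE bE, Matrix.toLin_toMatrix]
  calc curlRank F p = (D - Dᵀ).rank := by rw [curlRank, hcurl]
    _ ≤ D.rank + Dᵀ.rank := aux_matrix_rank_sub_le' _ _
    _ = 2 * Dᵀ.rank := by rw [Matrix.rank_transpose]; ring
    _ = _ := by rw [hrankD]



set_option maxHeartbeats 1000000 in
/-- **Theorem D** (size of the singular set): for `u ∈ C²(Ω)` and `F⃗ ∈ C¹(Ω)`, every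
`p ∈ Ω` admits an open neighborhood `V ⊆ Ω` such that `S(u) ∩ V` is contained in a
`C¹` embedded submanifold of dimension `m − ⌊(r(p)+1)/2⌋` — realized as the zero set
of a `C¹` submersion `G : V → ℝ^{⌊(r(p)+1)/2⌋}` — and in particular
`dim_H (S(u) ∩ V) ≤ m − ⌊(r(p)+1)/2⌋`. -/
theorem singular_set_dimension_bound {m : ℕ}
    (Ω : Set (EuclideanSpace ℝ (Fin m)))
    (hΩopen : IsOpen Ω) (hΩne : Ω.Nonempty) (hΩconn : IsConnected Ω)
    (u : EuclideanSpace ℝ (Fin m) → ℝ) (hu : ContDiffOn ℝ 2 u Ω)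
    (F : EuclideanSpace ℝ (Fin m) → EuclideanSpace ℝ (Fin m))
    (hF : ContDiffOn ℝ 1 F Ω)
    (p : EuclideanSpace ℝ (Fin m)) (hp : p ∈ Ω) :
    ∃ V : Set (EuclideanSpace ℝ (Fin m)), IsOpen V ∧ p ∈ V ∧ V ⊆ Ω ∧
      (∃ G : EuclideanSpace ℝ (Fin m) → EuclideanSpace ℝ (Fin ((curlRank F p + 1) / 2)),
        ContDiffOn ℝ 1 G V ∧
        (∀ x ∈ V, Function.Surjective (fderiv ℝ G x)) ∧
        (∀ x ∈ {y ∈ Ω | gradient u y + F y = 0} ∩ V, G x = 0)) ∧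
      dimH ({y ∈ Ω | gradient u y + F y = 0} ∩ V) ≤
        ((m - (curlRank F p + 1) / 2 : ℕ) : ℝ≥0∞) := by
  classical
  set k := (curlRank F p + 1) / 2 with hkdef
  set Φ : EuclideanSpace ℝ (Fin m) → EuclideanSpace ℝ (Fin m) :=
    fun y => gradient u y + F y with hΦdef
  set T := fderiv ℝ Φ p with hTdef
  have hpn : Ω ∈ nhds p := hΩopen.mem_nhds hp
  -- smoothness of Φ
  have hf1C : ContDiffOn ℝ 1 (fderiv ℝ u) Ω := hu.fderiv_of_isOpen hΩopen (by norm_num)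
  have hgradC : ContDiffOn ℝ 1 (gradient u) Ω :=
    (InnerProductSpace.toDual ℝ (EuclideanSpace ℝ (Fin m))).symm.contDiff.comp_contDiffOn hf1C
  have hΦC : ContDiffOn ℝ 1 Φ Ω := hgradC.add hF
  have hΦd : ∀ x ∈ Ω, DifferentiableAt ℝ Φ x := fun x hx =>
    (hΦC.contDiffAt (hΩopen.mem_nhds hx)).differentiableAt one_ne_zero
  -- the rank bound
  have hrank : curlRank F p ≤ 2 * finrank ℝ
      ↥(LinearMap.range (T : EuclideanSpace ℝ (Fin m) →ₗ[ℝ] EuclideanSpace ℝ (Fin m))) :=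
    aux_rank hΩopen hu hF hp
  have hkrange : k ≤ finrank ℝ
      ↥(LinearMap.range (T : EuclideanSpace ℝ (Fin m) →ₗ[ℝ] EuclideanSpace ℝ (Fin m))) := by
    omega
  have hkm : k ≤ m := by
    have := Submodule.finrank_le
      (LinearMap.range (T : EuclideanSpace ℝ (Fin m) →ₗ[ℝ] EuclideanSpace ℝ (Fin m)))
    rw [finrank_euclideanSpace_fin] at this
    omega
  -- choose L
  obtain ⟨L, hLsurj⟩ := aux_exists_L T hkrange
  set A := L.comp T with hAdef
  -- right inverse of A
  obtain ⟨R₀, hR₀⟩ := LinearMap.exists_rightInverse_of_surjective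
    (A : EuclideanSpace ℝ (Fin m) →ₗ[ℝ] EuclideanSpace ℝ (Fin k))
    (LinearMap.range_eq_top.2 hLsurj)
  set Rc := LinearMap.toContinuousLinearMap R₀ with hRcdef
  have hAR : ∀ y, A (Rc y) = y := by
    intro y
    have := LinearMap.ext_iff.1 hR₀ y
    simpa [hRcdef] using this
  -- continuity of x ↦ fderiv Φ x
  have hcont : ContinuousOn (fderiv ℝ Φ) Ω := hΦC.continuousOn_fderiv_of_isOpen hΩopen le_rfl
  set gfun : EuclideanSpace ℝ (Fin m) → ℝ := fun x =>
    ‖(L.comp (fderiv ℝ Φ x)).comp Rc - ContinuousLinearMap.id ℝ (EuclideanSpace ℝ (Fin k))‖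
    with hgfun
  have hgcont : ContinuousOn gfun Ω := by
    apply ContinuousOn.norm
    exact ((continuousOn_const.clm_comp hcont).clm_comp continuousOn_const).sub continuousOn_const
  set V₁ := Ω ∩ gfun ⁻¹' (Iio 1) with hV₁
  have hV₁open : IsOpen V₁ := hgcont.isOpen_inter_preimage hΩopen isOpen_Iio
  have hpV₁ : p ∈ V₁ := by
    constructor
    · exact hp
    · show gfun p < 1
      have : (L.comp (fderiv ℝ Φ p)).comp Rc
          = ContinuousLinearMap.id ℝ (EuclideanSpace ℝ (Fin k)) := by
        apply ContinuousLinearMap.ext; intro y; exact hAR y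
      show ‖(L.comp (fderiv ℝ Φ p)).comp Rc
        - ContinuousLinearMap.id ℝ (EuclideanSpace ℝ (Fin k))‖ < 1
      rw [this, sub_self, norm_zero]
      exact one_pos
  -- surjectivity of L ∘ fderiv Φ x on V₁
  have hsurjV : ∀ x ∈ V₁, Function.Surjective (L.comp (fderiv ℝ Φ x)) := by
    intro x hx
    set B := (L.comp (fderiv ℝ Φ x)).comp Rc with hB
    have hnorm : ‖ContinuousLinearMap.id ℝ (EuclideanSpace ℝ (Fin k)) - B‖ < 1 := by
      have := hx.2
      simp only [mem_preimage, mem_Iio, hgfun] at this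
      calc ‖ContinuousLinearMap.id ℝ (EuclideanSpace ℝ (Fin k)) - B‖
          = ‖-(B - ContinuousLinearMap.id ℝ (EuclideanSpace ℝ (Fin k)))‖ := by rw [neg_sub]
        _ = ‖B - ContinuousLinearMap.id ℝ (EuclideanSpace ℝ (Fin k))‖ := norm_neg _
        _ < 1 := this
    have hone : (1 : EuclideanSpace ℝ (Fin k) →L[ℝ] EuclideanSpace ℝ (Fin k))
        = ContinuousLinearMap.id ℝ (EuclideanSpace ℝ (Fin k)) := rfl
    set t := 1 - B with ht
    have htn : ‖t‖ < 1 := by rw [ht, hone]; exact hnorm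
    set un := Units.oneSub t htn with hun
    have huval : (un : EuclideanSpace ℝ (Fin k) →L[ℝ] EuclideanSpace ℝ (Fin k)) = B := by
      simp [hun, Units.oneSub, ht]
    have hBsurj : Function.Surjective B := by
      intro y
      set w := (↑(un⁻¹) : EuclideanSpace ℝ (Fin k) →L[ℝ] EuclideanSpace ℝ (Fin k)) y with hw
      refine ⟨w, ?_⟩
      have hmul := Units.mul_inv un
      have h2 : (↑un : EuclideanSpace ℝ (Fin k) →L[ℝ] EuclideanSpace ℝ (Fin k)) w = y := by
        calc (↑un : EuclideanSpace ℝ (Fin k) →L[ℝ] EuclideanSpace ℝ (Fin k)) w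
            = ((↑un * ↑(un⁻¹) : EuclideanSpace ℝ (Fin k) →L[ℝ] EuclideanSpace ℝ (Fin k))) y := rfl
          _ = y := by rw [hmul]; rfl
      rw [huval] at h2
      exact h2
    intro y
    obtain ⟨z, hz⟩ := hBsurj y
    exact ⟨Rc z, hz⟩
  -- the subspace K and the product equivalence
  set K := LinearMap.ker (A : EuclideanSpace ℝ (Fin m) →ₗ[ℝ] EuclideanSpace ℝ (Fin k)) with hK
  have hsurjlin : Function.Surjective
      ⇑(A : EuclideanSpace ℝ (Fin m) →ₗ[ℝ] EuclideanSpace ℝ (Fin k)) := by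
    simpa using hLsurj
  have hrn := LinearMap.finrank_range_add_finrank_ker
    (A : EuclideanSpace ℝ (Fin m) →ₗ[ℝ] EuclideanSpace ℝ (Fin k))
  rw [LinearMap.range_eq_top.2 hsurjlin, finrank_top, finrank_euclideanSpace_fin,
    finrank_euclideanSpace_fin] at hrn
  have hKfin : finrank ℝ ↥K = m - k := by rw [hK]; omega
  set Q := K.orthogonalProjectionOnto with hQ
  set T' := Q.prod A with hT'
  have hT'inj : Function.Injective T' := by
    intro x y hxy
    have h1 : Q x = Q y := (Prod.ext_iff.1 hxy).1
    have h2 : A x = A y := (Prod.ext_iff.1 hxy).2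
    have hxyK : x - y ∈ K := by
      simp only [hK, LinearMap.mem_ker]
      simp [map_sub, h2]
    have h3 : Q (x - y) = ⟨x - y, hxyK⟩ := by
      apply Subtype.ext
      exact Submodule.starProjection_eq_self_iff.2 hxyK
    have h4 : Q (x - y) = 0 := by rw [map_sub, h1, sub_self]
    have := h3.symm.trans h4
    have h5 : x - y = 0 := by simpa [Subtype.ext_iff] using this
    exact sub_eq_zero.1 h5
  have hT'bij : Function.Bijective
      (T' : EuclideanSpace ℝ (Fin m) →ₗ[ℝ] ↥K × EuclideanSpace ℝ (Fin k)) := by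
    have hfr : finrank ℝ (EuclideanSpace ℝ (Fin m))
        = finrank ℝ (↥K × EuclideanSpace ℝ (Fin k)) := by
      rw [finrank_euclideanSpace_fin, Module.finrank_prod, finrank_euclideanSpace_fin, hKfin]
      omega
    have hinj' : Function.Injective
        (T' : EuclideanSpace ℝ (Fin m) →ₗ[ℝ] ↥K × EuclideanSpace ℝ (Fin k)) := by
      simpa using hT'inj
    exact ⟨hinj',
      (LinearMap.injective_iff_surjective_of_finrank_eq_finrank hfr).1 hinj'⟩
  set e := LinearEquiv.toContinuousLinearEquiv
    (LinearEquiv.ofBijective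
      (T' : EuclideanSpace ℝ (Fin m) →ₗ[ℝ] ↥K × EuclideanSpace ℝ (Fin k)) hT'bij) with he
  have hecoe : (e : EuclideanSpace ℝ (Fin m) →L[ℝ] ↥K × EuclideanSpace ℝ (Fin k)) = T' := by
    apply ContinuousLinearMap.ext
    intro x
    rfl
  -- strict derivative of Ψ at p
  set Ψ : EuclideanSpace ℝ (Fin m) → ↥K × EuclideanSpace ℝ (Fin k) :=
    fun x => (Q x, L (Φ x)) with hΨ
  have hΦstrict : HasStrictFDerivAt Φ T p :=
    (hΦC.contDiffAt hpn).hasStrictFDerivAt one_ne_zero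
  have hΨstrict : HasStrictFDerivAt Ψ
      (e : EuclideanSpace ℝ (Fin m) →L[ℝ] ↥K × EuclideanSpace ℝ (Fin k)) p := by
    rw [hecoe, hT']
    exact Q.hasStrictFDerivAt.prodMk (L.hasStrictFDerivAt.comp p hΦstrict)
  obtain ⟨s, hps, hsopen, happrox⟩ := hΨstrict.approximates_deriv_on_open_nhds
  have hcnn : Subsingleton (EuclideanSpace ℝ (Fin m)) ∨
      ‖(e.symm : ↥K × EuclideanSpace ℝ (Fin k) →L[ℝ] EuclideanSpace ℝ (Fin m))‖₊⁻¹ / 2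
        < ‖(e.symm : ↥K × EuclideanSpace ℝ (Fin k) →L[ℝ] EuclideanSpace ℝ (Fin m))‖₊⁻¹ := by
    refine e.subsingleton_or_nnnorm_symm_pos.imp id fun h => ?_
    exact NNReal.half_lt_self (by positivity)
  have hanti := happrox.antilipschitz hcnn
  -- the neighborhood V
  refine ⟨V₁ ∩ s, hV₁open.inter hsopen, ⟨hpV₁, hps⟩, fun x hx => hx.1.1, ?_, ?_⟩
  · -- the submersion G
    refine ⟨fun x => L (Φ x), ?_, ?_, ?_⟩
    · exact (L.contDiff.comp_contDiffOn hΦC).mono fun x hx => hx.1.1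
    · intro x hx
      have hxΩ : x ∈ Ω := hx.1.1
      have hd : HasFDerivAt (fun y => L (Φ y)) (L.comp (fderiv ℝ Φ x)) x :=
        L.hasFDerivAt.comp x (hΦd x hxΩ).hasFDerivAt
      rw [hd.fderiv]
      exact hsurjV x hx.1
    · rintro x ⟨hxS, -⟩
      have : Φ x = 0 := hxS.2
      simp [this]
  · -- the Hausdorff dimension bound
    set c : ℝ≥0 :=
      (‖(e.symm : ↥K × EuclideanSpace ℝ (Fin k) →L[ℝ] EuclideanSpace ℝ (Fin m))‖₊⁻¹ -
        ‖(e.symm : ↥K × EuclideanSpace ℝ (Fin k) →L[ℝ] EuclideanSpace ℝ (Fin m))‖₊⁻¹ / 2)⁻¹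
      with hc
    have hbound : ∀ x ∈ {y ∈ Ω | gradient u y + F y = 0} ∩ (V₁ ∩ s),
        ∀ y ∈ {y ∈ Ω | gradient u y + F y = 0} ∩ (V₁ ∩ s),
        edist x y ≤ c * edist ((Q x : ↥K)) ((Q y : ↥K)) := by
      intro x hx y hy
      have hxs : x ∈ s := hx.2.2
      have hys : y ∈ s := hy.2.2
      have hΦx : Φ x = 0 := hx.1.2
      have hΦy : Φ y = 0 := hy.1.2
      have h := hanti ⟨x, hxs⟩ ⟨y, hys⟩
      have hrestrict : edist (s.domRestrict Ψ ⟨x, hxs⟩) (s.domRestrict Ψ ⟨y, hys⟩)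
          = edist (Q x) (Q y) := by
        simp only [Set.domRestrict_apply, hΨ, hΦx, hΦy, map_zero]
        rw [Prod.edist_eq]
        simp
      rw [hrestrict] at h
      exact h
    have := aux_dimH_le (fun x => (Q x : ↥K))
      ({y ∈ Ω | gradient u y + F y = 0} ∩ (V₁ ∩ s)) c hbound
    rw [hKfin] at this
    exact this
end

section
/- Lemma 8.1 (pointwise monotonicity inequality): Let m ≥ 1, let ε ≥ 0, and let A, B ∈ ℝ^m. Set α = √(ε² + |A|²) and β = √(ε² + |B|²), and assume α > 0 and β > 0. Then (A/α − B/β)·(A − B) ≥ ((α + β)/2)·|A/α − B/β|². Moreover, if ε = 0 then equality holds, and if ε > 0 then (A/α − B/β)·(A − B) = 0 if and only if A = B. (Applied pointwise with A = ∇u + F⃗ and B = ∇v + F⃗, this gives: (N_ε(u) − N_ε(v))·(∇u − ∇v) ≥ ((α+β)/2)|N_ε(u) − N_ε(v)|², where N_ε(w) = (∇w + F⃗)/√(ε² + |∇w + F⃗|²).) -/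
/-!
Writing `u = α⁻¹ • A` and `v = β⁻¹ • B`, the polarization-type identity
`⟪u - v, α • u - β • v⟫ = (α + β) / 2 * ‖u - v‖² + (α - β) / 2 * (‖u‖² - ‖v‖²)`
splits the left side into the claimed lower bound and a remainder. Since `‖u‖² = 1 - ε² / α²`
and `‖v‖² = 1 - ε² / β²`, the remainder is `ε² (α - β)² (α + β) / (2 α² β²) ≥ 0`, which
vanishes when `ε = 0`. When `ε > 0`, a vanishing left side forces both terms to vanish,
hence `α = β` and `u = v`, so `A = B`.
-/

open scoped RealInnerProductSpace

section InnerProductSpace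

variable {E : Type*} [NormedAddCommGroup E] [InnerProductSpace ℝ E]

theorem inner_sub_smul_sub_smul (u v : E) (a b : ℝ) :
    ⟪u - v, a • u - b • v⟫ =
      (a + b) / 2 * ‖u - v‖ ^ 2 + (a - b) / 2 * (‖u‖ ^ 2 - ‖v‖ ^ 2) := by
  rw [norm_sub_sq_real, inner_sub_left, inner_sub_right, inner_sub_right, real_inner_smul_right,
    real_inner_smul_right, real_inner_smul_right, real_inner_smul_right,
    real_inner_self_eq_norm_sq, real_inner_self_eq_norm_sq, real_inner_comm v u]
  ring

variable {A B : E} {a b e : ℝ}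

theorem norm_inv_smul_sq_of_sq_eq (ha : a ≠ 0) (hA : a ^ 2 = e + ‖A‖ ^ 2) :
    ‖a⁻¹ • A‖ ^ 2 = 1 - e / a ^ 2 := by
  rw [norm_smul, mul_pow, norm_inv, Real.norm_eq_abs, inv_pow, sq_abs]
  field_simp
  linarith

theorem inner_inv_smul_sub_inv_smul_sub (ha : a ≠ 0) (hb : b ≠ 0)
    (hA : a ^ 2 = e + ‖A‖ ^ 2) (hB : b ^ 2 = e + ‖B‖ ^ 2) :
    ⟪a⁻¹ • A - b⁻¹ • B, A - B⟫ =
      (a + b) / 2 * ‖a⁻¹ • A - b⁻¹ • B‖ ^ 2 + e * (a - b) ^ 2 * (a + b) / (2 * a ^ 2 * b ^ 2) := by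
  have hAB : A - B = a • (a⁻¹ • A) - b • (b⁻¹ • B) := by
    rw [smul_inv_smul₀ ha, smul_inv_smul₀ hb]
  rw [hAB, inner_sub_smul_sub_smul, norm_inv_smul_sq_of_sq_eq ha hA,
    norm_inv_smul_sq_of_sq_eq hb hB]
  congr 1
  field_simp
  ring

theorem eq_of_inner_inv_smul_sub_inv_smul_sub_eq_zero (ha : 0 < a) (hb : 0 < b) (he : 0 < e)
    (hA : a ^ 2 = e + ‖A‖ ^ 2) (hB : b ^ 2 = e + ‖B‖ ^ 2)
    (h : ⟪a⁻¹ • A - b⁻¹ • B, A - B⟫ = 0) : A = B := by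
  rw [inner_inv_smul_sub_inv_smul_sub ha.ne' hb.ne' hA hB] at h
  have hmain : 0 ≤ (a + b) / 2 * ‖a⁻¹ • A - b⁻¹ • B‖ ^ 2 := by positivity
  have hrest : 0 ≤ e * (a - b) ^ 2 * (a + b) / (2 * a ^ 2 * b ^ 2) := by positivity
  have hab : a = b := by
    have : e * (a - b) ^ 2 * (a + b) / (2 * a ^ 2 * b ^ 2) = 0 := by linarith
    have : (a - b) ^ 2 = 0 := by simpa [he.ne', ha.ne', hb.ne', (add_pos ha hb).ne'] using this
    exact sub_eq_zero.mp (pow_eq_zero_iff two_ne_zero |>.mp this)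
  have huv : a⁻¹ • A - b⁻¹ • B = 0 := by
    have : (a + b) / 2 * ‖a⁻¹ • A - b⁻¹ • B‖ ^ 2 = 0 := by linarith
    simpa [(add_pos ha hb).ne'] using this
  rw [← hab, sub_eq_zero] at huv
  exact smul_right_injective E (inv_ne_zero ha.ne') huv

end InnerProductSpace

theorem pointwise_monotonicity_general {m : ℕ} (ε : ℝ)
    (A B : EuclideanSpace ℝ (Fin m)) (α β : ℝ)
    (hα : α = Real.sqrt (ε ^ 2 + ‖A‖ ^ 2)) (hβ : β = Real.sqrt (ε ^ 2 + ‖B‖ ^ 2))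
    (hα0 : 0 < α) (hβ0 : 0 < β) :
    ((α + β) / 2) * ‖α⁻¹ • A - β⁻¹ • B‖ ^ 2 ≤ ⟪α⁻¹ • A - β⁻¹ • B, A - B⟫ ∧
    (ε = 0 → ⟪α⁻¹ • A - β⁻¹ • B, A - B⟫ = ((α + β) / 2) * ‖α⁻¹ • A - β⁻¹ • B‖ ^ 2) ∧
    (0 < ε → (⟪α⁻¹ • A - β⁻¹ • B, A - B⟫ = 0 ↔ A = B)) := by
  have hα2 : α ^ 2 = ε ^ 2 + ‖A‖ ^ 2 := hα ▸ Real.sq_sqrt (by positivity)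
  have hβ2 : β ^ 2 = ε ^ 2 + ‖B‖ ^ 2 := hβ ▸ Real.sq_sqrt (by positivity)
  have key := inner_inv_smul_sub_inv_smul_sub hα0.ne' hβ0.ne' hα2 hβ2
  have hrest : 0 ≤ ε ^ 2 * (α - β) ^ 2 * (α + β) / (2 * α ^ 2 * β ^ 2) := by positivity
  refine ⟨by linarith, fun hε => by simp [key, hε], fun hε => ⟨fun h => ?_, fun h => ?_⟩⟩
  · exact eq_of_inner_inv_smul_sub_inv_smul_sub_eq_zero hα0 hβ0 (by positivity) hα2 hβ2 h
  · rw [h, sub_self, inner_zero_right]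

/-- **Lemma 8.1** (pointwise monotonicity inequality): for `A, B ∈ ℝ^m`, `ε ≥ 0`,
`α = √(ε² + |A|²) > 0`, `β = √(ε² + |B|²) > 0`, one has
`(A/α − B/β)·(A − B) ≥ ((α+β)/2)|A/α − B/β|²`; equality holds when `ε = 0`, and for
`ε > 0` the left side vanishes if and only if `A = B`. -/
theorem pointwise_monotonicity {m : ℕ} (hm : 1 ≤ m) (ε : ℝ) (hε : 0 ≤ ε)
    (A B : EuclideanSpace ℝ (Fin m)) (α β : ℝ)
    (hα : α = Real.sqrt (ε ^ 2 + ‖A‖ ^ 2)) (hβ : β = Real.sqrt (ε ^ 2 + ‖B‖ ^ 2))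
    (hα0 : 0 < α) (hβ0 : 0 < β) :
    ((α + β) / 2) * ‖α⁻¹ • A - β⁻¹ • B‖ ^ 2 ≤ ⟪α⁻¹ • A - β⁻¹ • B, A - B⟫ ∧
    (ε = 0 → ⟪α⁻¹ • A - β⁻¹ • B, A - B⟫ = ((α + β) / 2) * ‖α⁻¹ • A - β⁻¹ • B‖ ^ 2) ∧
    (0 < ε → (⟪α⁻¹ • A - β⁻¹ • B, A - B⟫ = 0 ↔ A = B)) :=
  pointwise_monotonicity_general ε A B α β hα hβ hα0 hβ0
end
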